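/- arXiv:2103.07344 — 3 statements merged into one kernel-verified Lean document; each statement's English description precedes it below -/
import Mathlib

section
/- Every subset S of the Boolean cube {0,1}⁴ with exactly 6 elements contains a pair of 4-antipodes (two elements at Hamming distance 4), or two distinct unordered pairs of 3-antipodes (two distinct unordered pairs {v,w} and {v′,w′} of elements of S, each pair at Hamming distance 3). -/
/-!
Map `v` to its `±1` sign vector `v̂` in `ℝ⁴`, so that `⟪v̂, ŵ⟫ = 4 - 2 d(v, w)`. If `S` has no
antipodal pair, two distinct points of `S` of the same weight parity are at distance `2`, so their
sign vectors are orthogonal: each parity class `A`, `B` of `S` has at most `4` points and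
`‖∑_A v̂‖² = 4 |A|`. Points of opposite parity are at distance `1` or `3`, so
`⟪∑_A v̂, ∑_B ŵ⟫ = 2 |A| |B| - 4 n`, where `n` counts the pairs at distance `3`. As `|A| + |B| = 6`
and `|A|, |B| ≤ 4`, Cauchy–Schwarz `(2 |A| |B| - 4 n)² ≤ 16 |A| |B|` forces `n ≥ 2`.
-/

def hammingDist4 (v w : Fin 4 → Bool) : ℕ :=
  (Finset.univ.filter fun i => v i ≠ w i).card

theorem hammingDist4_eq_hammingDist (v w : Fin 4 → Bool) : hammingDist4 v w = hammingDist v w :=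
  rfl

open Finset

open scoped InnerProductSpace

theorem pair_ne_pair_of_ne {α : Type*} [DecidableEq α] {P : α → Prop} {p q : α × α}
    (hp : P p.1 ∧ ¬P p.2) (hq : P q.1 ∧ ¬P q.2) (hpq : p ≠ q) :
    ({p.1, p.2} : Finset α) ≠ {q.1, q.2} := by
  intro hpair
  have h1 : p.1 ∈ ({q.1, q.2} : Finset α) := hpair ▸ mem_insert_self _ _
  have h2 : p.2 ∈ ({q.1, q.2} : Finset α) := hpair ▸ mem_insert_of_mem (mem_singleton_self _)
  rw [mem_insert, mem_singleton] at h1 h2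
  refine hpq (Prod.ext (h1.resolve_right fun h => ?_) (h2.resolve_left fun h => ?_))
  exacts [hq.2 (h ▸ hp.1), hp.2 (h ▸ hq.1)]

section SignVector

variable {ι : Type*} [Fintype ι]

def signVector (v : ι → Bool) : EuclideanSpace ℝ ι :=
  WithLp.toLp 2 fun i => if v i then -1 else 1

theorem inner_signVector (v w : ι → Bool) :
    ⟪signVector v, signVector w⟫_ℝ = Fintype.card ι - 2 * hammingDist v w := by
  have hcoord : ∀ i, (if w i then (-1 : ℝ) else 1) * (if v i then -1 else 1) =
      1 - 2 * if v i ≠ w i then 1 else 0 := by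
    intro i; cases v i <;> cases w i <;> norm_num
  simp only [signVector, PiLp.inner_apply, RCLike.inner_apply, conj_trivial, hcoord,
    sum_sub_distrib, ← mul_sum, sum_boole, hammingDist]
  simp

theorem inner_signVector_eq_zero {v w : ι → Bool}
    (h : 2 * hammingDist v w = Fintype.card ι) : ⟪signVector v, signVector w⟫_ℝ = 0 := by
  rw [inner_signVector, ← h]
  push_cast; ring

theorem signVector_ne_zero [Nonempty ι] (v : ι → Bool) : signVector v ≠ 0 := by
  rw [← real_inner_self_pos, inner_signVector, hammingDist_self]
  simp [Fintype.card_pos]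

variable {A : Finset (ι → Bool)}

theorem inner_sum_signVector_self
    (hA : ∀ x ∈ A, ∀ y ∈ A, x ≠ y → 2 * hammingDist x y = Fintype.card ι) :
    ⟪∑ x ∈ A, signVector x, ∑ x ∈ A, signVector x⟫_ℝ = Fintype.card ι * #A := by
  rw [sum_inner, mul_comm, ← nsmul_eq_mul, ← sum_const]
  refine sum_congr rfl fun x hx => ?_
  rw [inner_sum, sum_eq_single_of_mem x hx fun y hy hyx => ?_, inner_signVector,
    hammingDist_self]
  · simp
  · exact inner_signVector_eq_zero (hA x hx y hy hyx.symm)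

theorem card_le_of_two_mul_hammingDist_eq [Nonempty ι]
    (hA : ∀ x ∈ A, ∀ y ∈ A, x ≠ y → 2 * hammingDist x y = Fintype.card ι) :
    #A ≤ Fintype.card ι := by
  have hindep : LinearIndependent ℝ fun x : A => signVector (x : ι → Bool) :=
    linearIndependent_of_ne_zero_of_inner_eq_zero (fun x => signVector_ne_zero _)
      fun x y hxy => inner_signVector_eq_zero (hA x x.2 y y.2 (Subtype.coe_ne_coe.mpr hxy))
  simpa using hindep.fintype_card_le_finrank

theorem even_hammingDist_iff (x y z : ι → Bool) :
    Even (hammingDist y z) ↔ (Even (hammingDist x y) ↔ Even (hammingDist x z)) := by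
  have hmod : (hammingDist y z : ZMod 2) = hammingDist x y + hammingDist x z := by
    simp only [hammingDist, card_filter, Nat.cast_sum, Nat.cast_ite, Nat.cast_one,
      Nat.cast_zero, ← sum_add_distrib]
    refine sum_congr rfl fun i _ => ?_
    cases x i <;> cases y i <;> cases z i <;> decide
  rw [← Nat.even_add, ← ZMod.natCast_eq_zero_iff_even, ← ZMod.natCast_eq_zero_iff_even,
    hmod, Nat.cast_add]

end SignVector

theorem hammingDist_eq_two_of_even {x y : Fin 4 → Bool} (hxy : x ≠ y)
    (h4 : hammingDist x y ≠ 4) (heven : Even (hammingDist x y)) : hammingDist x y = 2 := by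
  have hle : hammingDist x y ≤ 4 := hammingDist_le_card_fintype.trans_eq (Fintype.card_fin 4)
  have hne : hammingDist x y ≠ 0 := hammingDist_ne_zero.mpr hxy
  obtain ⟨k, hk⟩ := heven
  omega

theorem hammingDist_eq_one_or_three_of_not_even {x y : Fin 4 → Bool}
    (hodd : ¬Even (hammingDist x y)) : hammingDist x y = 1 ∨ hammingDist x y = 3 := by
  have hle : hammingDist x y ≤ 4 := hammingDist_le_card_fintype.trans_eq (Fintype.card_fin 4)
  obtain ⟨k, hk⟩ := Nat.not_even_iff_odd.mp hodd
  omega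

theorem inner_sum_signVector_of_hammingDist_odd {A B : Finset (Fin 4 → Bool)}
    (hAB : ∀ x ∈ A, ∀ y ∈ B, hammingDist x y = 1 ∨ hammingDist x y = 3) :
    ⟪∑ x ∈ A, signVector x, ∑ y ∈ B, signVector y⟫_ℝ =
      2 * (#A * #B) - 4 * #{p ∈ A ×ˢ B | hammingDist p.1 p.2 = 3} := by
  have hterm : ∀ p ∈ A ×ˢ B, ⟪signVector p.1, signVector p.2⟫_ℝ =
      2 - 4 * if hammingDist p.1 p.2 = 3 then 1 else 0 := by
    intro p hp
    rw [mem_product] at hp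
    rw [inner_signVector, Fintype.card_fin]
    rcases hAB _ hp.1 _ hp.2 with h | h <;> simp [h] <;> norm_num
  rw [sum_inner, ← sum_congr rfl fun x _ => (inner_sum _ _ _).symm, ← sum_product',
    sum_congr rfl hterm, sum_sub_distrib, ← mul_sum, sum_boole, sum_const, card_product]
  ring

theorem two_le_card_hammingDist_three {A B : Finset (Fin 4 → Bool)}
    (hA : ∀ x ∈ A, ∀ y ∈ A, x ≠ y → hammingDist x y = 2)
    (hB : ∀ x ∈ B, ∀ y ∈ B, x ≠ y → hammingDist x y = 2)
    (hAB : ∀ x ∈ A, ∀ y ∈ B, hammingDist x y = 1 ∨ hammingDist x y = 3)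
    (hcard : #A + #B = 6) :
    2 ≤ #{p ∈ A ×ˢ B | hammingDist p.1 p.2 = 3} := by
  have hA' : ∀ x ∈ A, ∀ y ∈ A, x ≠ y → 2 * hammingDist x y = Fintype.card (Fin 4) :=
    fun x hx y hy hxy => by rw [hA x hx y hy hxy, Fintype.card_fin]
  have hB' : ∀ x ∈ B, ∀ y ∈ B, x ≠ y → 2 * hammingDist x y = Fintype.card (Fin 4) :=
    fun x hx y hy hxy => by rw [hB x hx y hy hxy, Fintype.card_fin]
  have hcs := real_inner_mul_inner_self_le (∑ x ∈ A, signVector x) (∑ y ∈ B, signVector y)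
  rw [inner_sum_signVector_self hA', inner_sum_signVector_self hB',
    inner_sum_signVector_of_hammingDist_odd hAB, Fintype.card_fin] at hcs
  have ha := card_le_of_two_mul_hammingDist_eq hA'
  have hb := card_le_of_two_mul_hammingDist_eq hB'
  rw [Fintype.card_fin] at ha hb
  by_contra! hn
  generalize #{p ∈ A ×ˢ B | hammingDist p.1 p.2 = 3} = n at hn hcs
  generalize #A = a at *
  generalize #B = b at *
  obtain rfl : b = 6 - a := by omega
  have : 2 ≤ a := by omega
  interval_cases a <;> interval_cases n <;> norm_num at hcs

theorem exists_pairs_hammingDist_three (S : Finset (Fin 4 → Bool)) (hS : #S = 6)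
    (h4 : ∀ v ∈ S, ∀ w ∈ S, hammingDist v w ≠ 4) :
    ∃ v ∈ S, ∃ w ∈ S, ∃ v' ∈ S, ∃ w' ∈ S, hammingDist v w = 3 ∧ hammingDist v' w' = 3 ∧
      ({v, w} : Finset (Fin 4 → Bool)) ≠ {v', w'} := by
  set IsEven := fun v : Fin 4 → Bool => Even (hammingDist (fun _ => false) v)
  have hpar : ∀ x y, Even (hammingDist x y) ↔ (IsEven x ↔ IsEven y) :=
    even_hammingDist_iff _
  have hsame : ∀ x ∈ S, ∀ y ∈ S, x ≠ y → (IsEven x ↔ IsEven y) → hammingDist x y = 2 :=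
    fun x hx y hy hxy h => hammingDist_eq_two_of_even hxy (h4 x hx y hy) ((hpar x y).mpr h)
  have hA : ∀ x ∈ S.filter IsEven, ∀ y ∈ S.filter IsEven, x ≠ y → hammingDist x y = 2 := by
    simp only [mem_filter]
    exact fun x hx y hy hxy => hsame x hx.1 y hy.1 hxy (iff_of_true hx.2 hy.2)
  have hB : ∀ x ∈ S.filter (¬IsEven ·), ∀ y ∈ S.filter (¬IsEven ·), x ≠ y →
      hammingDist x y = 2 := by
    simp only [mem_filter]
    exact fun x hx y hy hxy => hsame x hx.1 y hy.1 hxy (iff_of_false hx.2 hy.2)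
  have hAB : ∀ x ∈ S.filter IsEven, ∀ y ∈ S.filter (¬IsEven ·),
      hammingDist x y = 1 ∨ hammingDist x y = 3 := by
    simp only [mem_filter]
    exact fun x hx y hy => hammingDist_eq_one_or_three_of_not_even (by rw [hpar]; tauto)
  have hcard : #(S.filter IsEven) + #(S.filter (¬IsEven ·)) = 6 := by
    rw [card_filter_add_card_filter_not, hS]
  obtain ⟨p, hp, q, hq, hpq⟩ := one_lt_card.mp (two_le_card_hammingDist_three hA hB hAB hcard)
  simp only [mem_filter, mem_product] at hp hq
  exact ⟨p.1, hp.1.1.1, p.2, hp.1.2.1, q.1, hq.1.1.1, q.2, hq.1.2.1, hp.2, hq.2,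
    pair_ne_pair_of_ne ⟨hp.1.1.2, hp.1.2.2⟩ ⟨hq.1.1.2, hq.1.2.2⟩ hpq⟩

/-- Any set of 6 elements of the Boolean cube `{0,1}⁴` contains a pair of
4-antipodes, or two distinct unordered pairs of 3-antipodes. -/
theorem boolean_cube_six_points_antipodes (S : Finset (Fin 4 → Bool))
    (hS : S.card = 6) :
    (∃ v ∈ S, ∃ w ∈ S, hammingDist4 v w = 4) ∨
    (∃ v ∈ S, ∃ w ∈ S, ∃ v' ∈ S, ∃ w' ∈ S,
      hammingDist4 v w = 3 ∧ hammingDist4 v' w' = 3 ∧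
      ({v, w} : Finset (Fin 4 → Bool)) ≠ {v', w'}) := by
  simp only [hammingDist4_eq_hammingDist]
  refine or_iff_not_imp_left.mpr fun h4 => exists_pairs_hammingDist_three S hS ?_
  exact fun v hv w hw h => h4 ⟨v, hv, w, hw, h⟩
end

section
/- Every 2-dimensional facet-continuous polycubic chain Q₁,…,Qₙ with more than 4 fractions whose body Q₁ ∪ ⋯ ∪ Qₙ is a square a + [0,s]² (a ∈ ℤ², s ∈ ℕ, n = s²) contains a collinear segment of length 3, i.e. there is an index i with c_{i+2} − c_{i+1} = c_{i+1} − c_i, where c_i denotes the lattice corner of Q_i. -/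
/-!
If no three consecutive corners are collinear, every step of the chain turns, so `c (i + 2)` is a
diagonal neighbour of `c i`. A corner cell of the square has only one diagonal neighbour inside
the square, so if it were visited at an index `k` with `2 ≤ k ≤ n - 3`, then
`c (k - 2) = c (k + 2)`. Hence every corner cell sits at one of the indices `0, 1, n - 2, n - 1`.
For `s ≥ 3`, three corner cells are pairwise `s - 1 ≥ 2` apart in some coordinate, so their
indices are pairwise at least 2 apart, and the two ends of the chain cannot host all three.
-/

open Set

/-- The unit lattice cube with corner `v ∈ ℤ^d`. -/
def cubeAt (d : ℕ) (v : Fin d → ℤ) : Set (EuclideanSpace ℝ (Fin d)) :=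
  {x | ∀ i, x i ∈ Icc (v i : ℝ) ((v i : ℝ) + 1)}

/-- A polycubic chain of length `n` in `ℝ^d`, given by the corners `c 0, …, c (n-1)`:
the corners are pairwise distinct and consecutive corners differ by a vector in
`{-1,0,1}^d \ {0}`. -/
def IsPolycubicChain (d n : ℕ) (c : ℕ → Fin d → ℤ) : Prop :=
  (∀ i j, i < n → j < n → c i = c j → i = j) ∧
  ∀ i, i + 1 < n →
    (∀ idx, c (i + 1) idx - c i idx ∈ ({-1, 0, 1} : Set ℤ)) ∧ c (i + 1) ≠ c i

/-- The chain is facet-continuous: each step is ± a standard basis vector. -/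
def FacetContinuous (d n : ℕ) (c : ℕ → Fin d → ℤ) : Prop :=
  ∀ i, i + 1 < n → ∃ j : Fin d,
    (c (i + 1) j - c i j = 1 ∨ c (i + 1) j - c i j = -1) ∧
    ∀ idx, idx ≠ j → c (i + 1) idx = c i idx

/-- The dilation of a polycubic chain: the maximum over all segments of
`diam^d / volume` of the body of the segment. -/
noncomputable def chainDilation (d n : ℕ) (c : ℕ → Fin d → ℤ) : ℝ :=
  sSup {w : ℝ | ∃ i j : ℕ, i ≤ j ∧ j < n ∧
    w = Metric.diam (⋃ k ∈ Finset.Icc i j, cubeAt d (c k)) ^ d / ((j - i + 1 : ℕ) : ℝ)}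

def IsTurning {d : ℕ} (n : ℕ) (c : ℕ → Fin d → ℤ) : Prop :=
  ∀ i, i + 2 < n → c (i + 2) - c (i + 1) ≠ c (i + 1) - c i

lemma Int.add_half_mem_Icc_iff {v m M : ℤ} : (v : ℝ) + 1 / 2 ∈ Icc (m : ℝ) M ↔ v ∈ Ico m M := by
  simp only [mem_Icc, mem_Ico]
  constructor
  · rintro ⟨hm, hM⟩
    constructor
    · by_contra! h
      have : (v : ℝ) + 1 ≤ m := by exact_mod_cast h
      linarith
    · by_contra! h
      have : (M : ℝ) ≤ v := by exact_mod_cast h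
      linarith
  · rintro ⟨hm, hM⟩
    have : (m : ℝ) ≤ v := by exact_mod_cast hm
    have : (v : ℝ) + 1 ≤ M := by exact_mod_cast hM
    constructor <;> linarith

noncomputable def cubeCenter {d : ℕ} (v : Fin d → ℤ) : EuclideanSpace ℝ (Fin d) :=
  WithLp.toLp 2 fun i => (v i : ℝ) + 1 / 2

lemma cubeCenter_mem_cubeAt_iff {d : ℕ} {v w : Fin d → ℤ} :
    cubeCenter v ∈ cubeAt d w ↔ v = w := by
  simp only [cubeCenter, cubeAt, mem_ofPred_eq, funext_iff]
  refine forall_congr' fun i => ?_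
  have h := Int.add_half_mem_Icc_iff (v := v i) (m := w i) (M := w i + 1)
  push_cast at h
  rw [h, mem_Ico]
  omega

lemma image_Iio_eq_Icc_of_body_eq_box {d n s : ℕ} {c : ℕ → Fin d → ℤ} {a : Fin d → ℤ}
    (hbody : (⋃ k ∈ Finset.range n, cubeAt d (c k)) =
      {x : EuclideanSpace ℝ (Fin d) | ∀ i, x i ∈ Icc ((a i : ℝ)) ((a i : ℝ) + s)}) :
    c '' Iio n = Icc a (fun i => a i + s - 1) := by
  ext v
  have hv := congrArg (cubeCenter v ∈ ·) hbody
  simp only [mem_iUnion, Finset.mem_range, cubeCenter_mem_cubeAt_iff, exists_prop, eq_iff_iff,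
    eq_comm (a := v)] at hv
  simp only [mem_image, mem_Iio]
  rw [hv]
  simp only [cubeCenter, mem_ofPred_eq, mem_Icc, Pi.le_def, ← forall_and]
  refine forall_congr' fun i => ?_
  have h := Int.add_half_mem_Icc_iff (v := v i) (m := a i) (M := a i + s)
  push_cast at h
  rw [← mem_Icc, h, mem_Ico]
  omega

lemma IsPolycubicChain.abs_sub_le_one {d n i : ℕ} {c : ℕ → Fin d → ℤ}
    (hchain : IsPolycubicChain d n c) (hi : i + 1 < n) (idx : Fin d) :
    |c (i + 1) idx - c i idx| ≤ 1 := by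
  have h := (hchain.2 i hi).1 idx
  simp only [mem_insert_iff, mem_singleton_iff] at h
  rcases h with h | h | h <;> simp [h]

lemma IsPolycubicChain.add_two_le_or_of_two_le_abs_sub {d n k l : ℕ} {c : ℕ → Fin d → ℤ}
    (hchain : IsPolycubicChain d n c) (hk : k < n) (hl : l < n) {idx : Fin d}
    (h : 2 ≤ |c k idx - c l idx|) : k + 2 ≤ l ∨ l + 2 ≤ k := by
  by_contra! hkl
  rcases (by omega : l = k ∨ l = k + 1 ∨ k = l + 1) with rfl | rfl | rfl
  · simp at h
  · have := hchain.abs_sub_le_one hl idx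
    rw [abs_sub_comm] at this
    omega
  · have := hchain.abs_sub_le_one hk idx
    omega

lemma FacetContinuous.abs_add_abs_eq_one {n i : ℕ} {c : ℕ → Fin 2 → ℤ}
    (hfc : FacetContinuous 2 n c) (hi : i + 1 < n) :
    |c (i + 1) 0 - c i 0| + |c (i + 1) 1 - c i 1| = 1 := by
  obtain ⟨j, hj, hother⟩ := hfc i hi
  fin_cases j
  · have h1 := hother 1 (by decide)
    simp only [Fin.zero_eta, Fin.isValue] at hj
    rw [h1, sub_self, abs_zero, add_zero]
    rcases hj with hj | hj <;> simp [hj]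
  · have h0 := hother 0 (by decide)
    simp only [Fin.mk_one, Fin.isValue] at hj
    rw [h0, sub_self, abs_zero, zero_add]
    rcases hj with hj | hj <;> simp [hj]

lemma IsTurning.abs_sub_eq_one {n i : ℕ} {c : ℕ → Fin 2 → ℤ} (hturn : IsTurning n c)
    (hfc : FacetContinuous 2 n c) (hi : i + 2 < n) (hne : c (i + 2) ≠ c i) (idx : Fin 2) :
    |c (i + 2) idx - c i idx| = 1 := by
  have h₁ := hfc.abs_add_abs_eq_one (i := i) (by omega)
  have h₂ := hfc.abs_add_abs_eq_one (i := i + 1) hi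
  have hne' := hturn i hi
  simp only [Ne, funext_iff, Fin.forall_fin_two, Pi.sub_apply] at hne hne'
  -- two unit steps along the same axis would either go straight on or backtrack
  fin_cases idx <;> simp only [Fin.zero_eta, Fin.mk_one] <;> grind

lemma eq_of_abs_sub_eq_one_of_corner {ι : Type*} {lo hi v w w' : ι → ℤ}
    (hv : ∀ i, v i = lo i ∨ v i = hi i) (hw : w ∈ Icc lo hi) (hw' : w' ∈ Icc lo hi)
    (hvw : ∀ i, |w i - v i| = 1) (hvw' : ∀ i, |w' i - v i| = 1) : w = w' := by
  funext i
  have := hw.1 i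
  have := hw.2 i
  have := hw'.1 i
  have := hw'.2 i
  have := hvw i
  have := hvw' i
  rcases hv i with h | h <;> grind

lemma IsTurning.index_lt_two_or_of_corner {n k : ℕ} {c : ℕ → Fin 2 → ℤ} {lo hi : Fin 2 → ℤ}
    (hturn : IsTurning n c) (hchain : IsPolycubicChain 2 n c) (hfc : FacetContinuous 2 n c)
    (hbox : ∀ l < n, c l ∈ Icc lo hi) (hk : k < n) (hcorner : ∀ i, c k i = lo i ∨ c k i = hi i) :
    k < 2 ∨ n ≤ k + 2 := by
  by_contra! h
  obtain ⟨l, rfl⟩ : ∃ l, k = l + 2 := ⟨k - 2, by omega⟩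
  have hinj := hchain.1
  have hback (i : Fin 2) : |c l i - c (l + 2) i| = 1 := by
    rw [abs_sub_comm]
    exact hturn.abs_sub_eq_one hfc (by omega)
      (fun he => by have := hinj _ _ (by omega) (by omega) he; omega) i
  have hfwd : ∀ i, |c (l + 4) i - c (l + 2) i| = 1 :=
    hturn.abs_sub_eq_one (i := l + 2) hfc (by omega)
      (fun he => by have := hinj _ _ (by omega) (by omega) he; omega)
  have := hinj l (l + 4) (by omega) (by omega)
    (eq_of_abs_sub_eq_one_of_corner hcorner (hbox l (by omega)) (hbox _ (by omega)) hback hfwd)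
  omega

lemma IsTurning.image_Iio_ne_Icc {n : ℕ} {c : ℕ → Fin 2 → ℤ} {lo hi : Fin 2 → ℤ}
    (hturn : IsTurning n c) (hchain : IsPolycubicChain 2 n c) (hfc : FacetContinuous 2 n c)
    (hgap : ∀ i, lo i + 2 ≤ hi i) : c '' Iio n ≠ Icc lo hi := by
  intro hrange
  have hbox : ∀ k < n, c k ∈ Icc lo hi := fun k hk => hrange ▸ mem_image_of_mem c hk
  have hcorner (v : Fin 2 → ℤ) (hv : ∀ i, v i = lo i ∨ v i = hi i) :
      ∃ k < n, c k = v ∧ (k < 2 ∨ n ≤ k + 2) := by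
    obtain ⟨k, hk, rfl⟩ : v ∈ c '' Iio n :=
      hrange ▸ ⟨fun i => by have := hgap i; grind, fun i => by have := hgap i; grind⟩
    exact ⟨k, hk, rfl, hturn.index_lt_two_or_of_corner hchain hfc hbox hk hv⟩
  obtain ⟨k₀, hk₀, hc₀, h₀⟩ := hcorner ![lo 0, lo 1] (by simp [Fin.forall_fin_two])
  obtain ⟨k₁, hk₁, hc₁, h₁⟩ := hcorner ![hi 0, lo 1] (by simp [Fin.forall_fin_two])
  obtain ⟨k₂, hk₂, hc₂, h₂⟩ := hcorner ![lo 0, hi 1] (by simp [Fin.forall_fin_two])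
  have h₀₁ := hchain.add_two_le_or_of_two_le_abs_sub hk₀ hk₁ (idx := 0)
    (le_abs.2 (Or.inr (by simp [hc₀, hc₁]; grind)))
  have h₀₂ := hchain.add_two_le_or_of_two_le_abs_sub hk₀ hk₂ (idx := 1)
    (le_abs.2 (Or.inr (by simp [hc₀, hc₂]; grind)))
  have h₁₂ := hchain.add_two_le_or_of_two_le_abs_sub hk₁ hk₂ (idx := 0)
    (le_abs.2 (Or.inl (by simp [hc₁, hc₂]; grind)))
  omega

/-- A 2D facet-continuous polycubic chain with more than 4 fractions whose body
is a square `a + [0,s]²` contains a collinear segment of length 3. -/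
theorem square_chain_has_collinear_triple (s n : ℕ) (c : ℕ → Fin 2 → ℤ)
    (a : Fin 2 → ℤ) (hn : n = s ^ 2) (h4 : 4 < n)
    (hchain : IsPolycubicChain 2 n c) (hfc : FacetContinuous 2 n c)
    (hbody : (⋃ k ∈ Finset.range n, cubeAt 2 (c k)) =
      {x : EuclideanSpace ℝ (Fin 2) | ∀ i, x i ∈ Icc ((a i : ℝ)) ((a i : ℝ) + s)}) :
    ∃ i, i + 2 < n ∧
      ∀ idx, c (i + 2) idx - c (i + 1) idx = c (i + 1) idx - c i idx := by
  by_contra hcon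
  have hturn : IsTurning n c := fun i hi h => hcon ⟨i, hi, fun idx => congrFun h idx⟩
  have hs : 3 ≤ s := by
    by_contra! h
    have := Nat.pow_le_pow_left (Nat.le_of_lt_succ h) 2
    omega
  exact hturn.image_Iio_ne_Icc hchain hfc (fun i => by omega)
    (image_Iio_eq_Icc_of_body_eq_box hbody)
end

section
/- Every 3-dimensional facet-continuous polycubic chain Q₁, Q₂, Q₃, Q₄ of length 4 with empty intersection Q₁ ∩ Q₂ ∩ Q₃ ∩ Q₄ = ∅ has dilation at least 7√14/2 = 13.0958…. -/
open Set

/-!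
Lattice cubes whose corners pairwise differ by at most 1 in every coordinate share a point
(the coordinatewise maximum of the corners). So an empty intersection forces two corners of
the chain at distance 2 along some axis `i`. With only three unit moves this needs two moves
along `i` in the same direction, and since the chain never revisits a corner, the third move
cannot undo either of them: `|c₃ i - c₀ i| ≥ 2`. Each move changes the coordinate sum by `±1`,
so `∑ (c₃ - c₀)` is odd, and then `∑ (|c₃ i - c₀ i| + 1)² ≥ 14`. The left-hand side is the
squared distance between opposite corners of the first and the last cube, so the whole chain has diameter
at least `√14` and dilation at least `14√14 / 4 = 7√14 / 2`.
-/

lemma isBounded_cubeAt (d : ℕ) (v : Fin d → ℤ) : Bornology.IsBounded (cubeAt d v) := by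
  refine (Metric.isBounded_iff_subset_closedBall (WithLp.toLp 2 fun i => (v i : ℝ))).2
    ⟨√d, fun x hx => ?_⟩
  rw [Metric.mem_closedBall, EuclideanSpace.dist_eq]
  refine Real.sqrt_le_sqrt ?_
  calc ∑ i, dist (x i) (v i : ℝ) ^ 2 ≤ ∑ _i : Fin d, (1 : ℝ) := by
        refine Finset.sum_le_sum fun i _ => ?_
        obtain ⟨h₁, h₂⟩ := hx i
        rw [Real.dist_eq, sq_abs]
        nlinarith
    _ = d := by simp

lemma exists_mem_Icc_abs_sub_eq (a b : ℤ) :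
    ∃ s ∈ Icc (a : ℝ) (a + 1), ∃ t ∈ Icc (b : ℝ) (b + 1), |t - s| = |(b : ℝ) - a| + 1 := by
  rcases le_total a b with hab | hab
  · refine ⟨a, ⟨le_rfl, by linarith⟩, b + 1, ⟨by linarith, le_rfl⟩, ?_⟩
    have : (a : ℝ) ≤ b := by exact_mod_cast hab
    rw [abs_of_nonneg (by linarith), abs_of_nonneg (by linarith)]
    ring
  · refine ⟨a + 1, ⟨by linarith, le_rfl⟩, b, ⟨le_rfl, by linarith⟩, ?_⟩
    have : (b : ℝ) ≤ a := by exact_mod_cast hab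
    rw [abs_of_nonpos (by linarith), abs_of_nonpos (by linarith)]
    ring

lemma exists_mem_cubeAt_sq_dist_eq {d : ℕ} (v w : Fin d → ℤ) :
    ∃ x ∈ cubeAt d v, ∃ y ∈ cubeAt d w,
      dist x y ^ 2 = ((∑ i, (|w i - v i| + 1) ^ 2 : ℤ) : ℝ) := by
  choose s hs t ht hst using fun i => exists_mem_Icc_abs_sub_eq (v i) (w i)
  refine ⟨WithLp.toLp 2 s, hs, WithLp.toLp 2 t, ht, ?_⟩
  rw [EuclideanSpace.dist_eq, Real.sq_sqrt (by positivity)]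
  push_cast
  refine Finset.sum_congr rfl fun i _ => ?_
  rw [Real.dist_eq, abs_sub_comm, hst]

lemma exists_forall_mem_cubeAt {d : ℕ} {ι : Type*} {s : Finset ι} (hs : s.Nonempty)
    {c : ι → Fin d → ℤ} (h : ∀ k ∈ s, ∀ l ∈ s, ∀ i, c l i ≤ c k i + 1) :
    ∃ x, ∀ k ∈ s, x ∈ cubeAt d (c k) := by
  refine ⟨WithLp.toLp 2 fun i => ((s.sup' hs (c · i) : ℤ) : ℝ), fun k hk i => ⟨?_, ?_⟩⟩
  · exact Int.cast_le.2 (Finset.le_sup' (c · i) hk)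
  · have := Int.cast_le (R := ℝ) |>.2 (Finset.sup'_le hs (c · i) fun l hl => h k hk l hl i)
    push_cast at this
    exact this

lemma le_chainDilation {d n : ℕ} (c : ℕ → Fin d → ℤ) {i j : ℕ} (hij : i ≤ j) (hj : j < n) :
    Metric.diam (⋃ k ∈ Finset.Icc i j, cubeAt d (c k)) ^ d / ((j - i + 1 : ℕ) : ℝ) ≤
      chainDilation d n c := by
  refine le_csSup (Set.Finite.bddAbove ?_) ⟨i, j, hij, hj, rfl⟩
  refine (Set.finite_range fun p : Fin n × Fin n =>
    Metric.diam (⋃ k ∈ Finset.Icc p.1.1 p.2.1, cubeAt d (c k)) ^ d /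
      ((p.2.1 - p.1.1 + 1 : ℕ) : ℝ)).subset ?_
  rintro _ ⟨i, j, hij, hj, rfl⟩
  exact ⟨(⟨i, hij.trans_lt hj⟩, ⟨j, hj⟩), rfl⟩

namespace FacetContinuous

variable {d n : ℕ} {c : ℕ → Fin d → ℤ}

lemma abs_sub_le_one (hfc : FacetContinuous d n c) {k : ℕ} (hk : k + 1 < n) (i : Fin d) :
    |c (k + 1) i - c k i| ≤ 1 := by
  obtain ⟨j, hj, hother⟩ := hfc k hk
  by_cases hij : i = j
  · subst hij
    rcases hj with h | h <;> simp [h]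
  · simp [hother i hij]

lemma apply_eq_of_ne (hfc : FacetContinuous d n c) {k : ℕ} (hk : k + 1 < n) {i : Fin d}
    (hi : c (k + 1) i ≠ c k i) {i' : Fin d} (hi' : i' ≠ i) : c (k + 1) i' = c k i' := by
  obtain ⟨j, -, hother⟩ := hfc k hk
  obtain rfl : i = j := by_contra fun h => hi (hother i h)
  exact hother i' hi'

lemma eq_of_apply_eq (hfc : FacetContinuous d n c) {k : ℕ} (hk : k + 2 < n) {i : Fin d}
    (h₁ : c (k + 1) i ≠ c k i) (h₂ : c (k + 2) i ≠ c (k + 1) i) (h : c (k + 2) i = c k i) :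
    c (k + 2) = c k := by
  funext i'
  by_cases hi' : i' = i
  · rwa [hi']
  · rw [hfc.apply_eq_of_ne hk h₂ hi', hfc.apply_eq_of_ne (by omega) h₁ hi']

lemma sum_sub_modEq (hfc : FacetContinuous d n c) {k : ℕ} (hk : k < n) :
    ∑ i, (c k i - c 0 i) ≡ k [ZMOD 2] := by
  induction k with
  | zero => simp [Int.ModEq]
  | succ k ih =>
    obtain ⟨j, hj, hother⟩ := hfc k hk
    have hstep : ∑ i, (c (k + 1) i - c k i) = c (k + 1) j - c k j :=
      Finset.sum_eq_single j (fun i _ hij => by rw [hother i hij, sub_self]) (by simp)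
    have hsplit : ∑ i, (c (k + 1) i - c 0 i) =
        ∑ i, (c k i - c 0 i) + ∑ i, (c (k + 1) i - c k i) := by
      rw [← Finset.sum_add_distrib]; simp
    have := ih (by omega)
    unfold Int.ModEq at *
    push_cast
    omega

end FacetContinuous

lemma two_le_abs_sub_of_add_two_le {d : ℕ} {c : ℕ → Fin d → ℤ} (hchain : IsPolycubicChain d 4 c)
    (hfc : FacetContinuous d 4 c) {k l : ℕ} (hk : k < 4) (hl : l < 4) {i : Fin d}
    (hgap : c k i + 2 ≤ c l i) : 2 ≤ |c 3 i - c 0 i| := by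
  have h₀ : |c 1 i - c 0 i| ≤ 1 := hfc.abs_sub_le_one (k := 0) (by norm_num) i
  have h₁ : |c 2 i - c 1 i| ≤ 1 := hfc.abs_sub_le_one (k := 1) (by norm_num) i
  have h₂ : |c 3 i - c 2 i| ≤ 1 := hfc.abs_sub_le_one (k := 2) (by norm_num) i
  have hback₀ : c 1 i ≠ c 0 i → c 2 i ≠ c 1 i → c 2 i ≠ c 0 i := fun h₁ h₂ h =>
    absurd (hchain.1 2 0 (by norm_num) (by norm_num)
      (hfc.eq_of_apply_eq (k := 0) (by norm_num) h₁ h₂ h)) (by norm_num)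
  have hback₁ : c 2 i ≠ c 1 i → c 3 i ≠ c 2 i → c 3 i ≠ c 1 i := fun h₁ h₂ h =>
    absurd (hchain.1 3 1 (by norm_num) (by norm_num)
      (hfc.eq_of_apply_eq (k := 1) (by norm_num) h₁ h₂ h)) (by norm_num)
  rw [abs_le] at h₀ h₁ h₂
  rw [le_abs']
  interval_cases k <;> interval_cases l <;> omega

lemma fourteen_le_sq_add_sq_add_sq {a b c : ℤ} (ha : 2 ≤ a) (hb : 0 ≤ b) (hc : 0 ≤ c)
    (hodd : Odd (a + b + c)) : 14 ≤ (a + 1) ^ 2 + (b + 1) ^ 2 + (c + 1) ^ 2 := by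
  rw [Int.odd_iff] at hodd
  rcases (show 3 ≤ a ∨ 1 ≤ b ∨ 1 ≤ c by omega) with h | h | h <;> nlinarith

lemma fourteen_le_sum_sq {Δ : Fin 3 → ℤ} {i : Fin 3} (hi : 2 ≤ |Δ i|) (hodd : Odd (∑ j, Δ j)) :
    14 ≤ ∑ j, (|Δ j| + 1) ^ 2 := by
  have habs : Odd (|Δ 0| + |Δ 1| + |Δ 2|) := by
    rw [Fin.sum_univ_three, Int.odd_iff] at hodd
    simp only [Int.odd_iff, Int.abs_eq_natAbs]
    omega
  have h₀ := abs_nonneg (Δ 0)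
  have h₁ := abs_nonneg (Δ 1)
  have h₂ := abs_nonneg (Δ 2)
  rw [Fin.sum_univ_three]
  obtain rfl | rfl | rfl : i = 0 ∨ i = 1 ∨ i = 2 := by omega
  · exact fourteen_le_sq_add_sq_add_sq hi h₁ h₂ habs
  · linarith [fourteen_le_sq_add_sq_add_sq hi h₀ h₂ (by convert habs using 1; ring)]
  · linarith [fourteen_le_sq_add_sq_add_sq hi h₀ h₁ (by convert habs using 1; ring)]

/-- A 3D facet-continuous polycubic chain of length 4 with empty intersection of
its fractions has dilation at least `7√14/2`. -/
theorem chain3d_four_empty_intersection_dilation_ge (c : ℕ → Fin 3 → ℤ)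
    (hchain : IsPolycubicChain 3 4 c) (hfc : FacetContinuous 3 4 c)
    (hempty : cubeAt 3 (c 0) ∩ cubeAt 3 (c 1) ∩ cubeAt 3 (c 2) ∩ cubeAt 3 (c 3) = ∅) :
    7 * Real.sqrt 14 / 2 ≤ chainDilation 3 4 c := by
  obtain ⟨k, hk, l, hl, i, hgap⟩ : ∃ k < 4, ∃ l < 4, ∃ i, c k i + 2 ≤ c l i := by
    by_contra! hspread
    obtain ⟨x, hx⟩ := exists_forall_mem_cubeAt (s := Finset.range 4) (c := c) (by simp)
      fun k hk l hl i => by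
        have := hspread k (Finset.mem_range.1 hk) l (Finset.mem_range.1 hl) i
        omega
    have hx' : x ∈ cubeAt 3 (c 0) ∩ cubeAt 3 (c 1) ∩ cubeAt 3 (c 2) ∩ cubeAt 3 (c 3) :=
      ⟨⟨⟨hx 0 (by simp), hx 1 (by simp)⟩, hx 2 (by simp)⟩, hx 3 (by simp)⟩
    rwa [hempty] at hx'
  have hodd : Odd (∑ i, (c 3 i - c 0 i)) :=
    Int.odd_iff.2 (hfc.sum_sub_modEq (k := 3) (by norm_num))
  have h14 : 14 ≤ ∑ i, (|c 3 i - c 0 i| + 1) ^ 2 :=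
    fourteen_le_sum_sq (two_le_abs_sub_of_add_two_le hchain hfc hk hl hgap) hodd
  obtain ⟨x, hx, y, hy, hxy⟩ := exists_mem_cubeAt_sq_dist_eq (c 0) (c 3)
  set S := ⋃ k ∈ Finset.Icc 0 3, cubeAt 3 (c k)
  have hS : Bornology.IsBounded S :=
    (Bornology.isBounded_biUnion_finset _).2 fun k _ => isBounded_cubeAt 3 (c k)
  have hdiam : √14 ≤ Metric.diam S := by
    calc √14 ≤ dist x y := Real.sqrt_le_iff.2 ⟨dist_nonneg, by rw [hxy]; exact_mod_cast h14⟩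
      _ ≤ Metric.diam S := Metric.dist_le_diam_of_mem hS
          (mem_biUnion (by simp) hx) (mem_biUnion (by simp) hy)
  calc 7 * √14 / 2 = √14 ^ 3 / 4 := by
        rw [pow_succ, Real.sq_sqrt (by norm_num)]; ring
    _ ≤ Metric.diam S ^ 3 / ((3 - 0 + 1 : ℕ) : ℝ) := by norm_num; gcongr
    _ ≤ chainDilation 3 4 c := le_chainDilation c (by norm_num) (by norm_num)
end
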